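/- arXiv:2407.17796 — 6 statements merged into one kernel-verified Lean document; each statement's English description precedes it below -/
import Mathlib

section
/- The B_q(n) × B_q(n) real matrix whose (X,Y) entry is √(φ^{dim X}·q^{dim X(dim X−1)/2}) · A_n(X,Y) · (√(φ^{dim Y}·q^{dim Y(dim Y−1)/2}))^{−1} is a symmetric matrix. (That is, D_n A_n D_n^{−1} is symmetric, where D_n is the diagonal matrix with diagonal entry √(φ^{dim X}·q^{dim X(dim X−1)/2}) at X.) -/
open Module

open Classical in
noncomputable def adjEnt (q : ℕ) (φ : ℝ) {F : Type} [Field F] {V : Type} [AddCommGroup V]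
    [Module F V] (X Y : Submodule F V) : ℝ :=
  if Y ≤ X ∧ finrank F X = finrank F Y + 1 then 1
  else if X ≤ Y ∧ finrank F Y = finrank F X + 1 then φ * (q : ℝ) ^ finrank F X
  else if X = Y then ((φ - 1) / ((q : ℝ) - 1)) * (q : ℝ) ^ finrank F X
  else 0

lemma tri_aux (d : ℕ) : (d + 1) * ((d + 1) - 1) / 2 = d * (d - 1) / 2 + d := by
  rcases d with _ | m
  · rfl
  · have h : (m + 1 + 1) * ((m + 1 + 1) - 1) = (m + 1) * ((m + 1) - 1) + (m + 1) * 2 := by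
      simp; ring
    rw [h, Nat.add_mul_div_right _ _ (by norm_num : 0 < 2)]

lemma w_step (q : ℕ) (φ : ℝ) (d : ℕ) :
    φ ^ (d + 1) * (q : ℝ) ^ ((d + 1) * ((d + 1) - 1) / 2) =
      (φ ^ d * (q : ℝ) ^ (d * (d - 1) / 2)) * (φ * (q : ℝ) ^ d) := by
  rw [tri_aux, pow_succ, pow_add]; ring

theorem stmt_3 (q n : ℕ) (F : Type) [Field F] [Fintype F] (hq : Fintype.card F = q)
    (φ : ℝ) (hφ : 0 < φ) :
    (Matrix.of fun X Y : Submodule F (Fin n → F) =>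
      Real.sqrt (φ ^ finrank F X * (q : ℝ) ^ (finrank F X * (finrank F X - 1) / 2)) *
        adjEnt q φ X Y *
        (Real.sqrt (φ ^ finrank F Y * (q : ℝ) ^ (finrank F Y * (finrank F Y - 1) / 2)))⁻¹).IsSymm := by
  have hq1 : 0 < q := hq ▸ Fintype.card_pos
  have hqR : (0 : ℝ) < q := by exact_mod_cast hq1
  rw [Matrix.IsSymm]
  ext X Y
  simp only [Matrix.transpose_apply, Matrix.of_apply]
  set dX := finrank F X with hdX
  set dY := finrank F Y with hdY
  set wX : ℝ := φ ^ dX * (q : ℝ) ^ (dX * (dX - 1) / 2) with hwX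
  set wY : ℝ := φ ^ dY * (q : ℝ) ^ (dY * (dY - 1) / 2) with hwY
  have hwXpos : 0 < wX := by positivity
  have hwYpos : 0 < wY := by positivity
  have key : wX * adjEnt q φ X Y = wY * adjEnt q φ Y X := by
    have hdc : ¬(dX = dY + 1 ∧ dY = dX + 1) := by omega
    unfold adjEnt
    rw [← hdX, ← hdY]
    by_cases h1 : Y ≤ X ∧ dX = dY + 1
    · have h2 : ¬(X ≤ Y ∧ dY = dX + 1) := fun h => hdc ⟨h1.2, h.2⟩
      rw [if_pos h1, if_neg h2, if_pos h1, hwX, hwY, h1.2, w_step]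
      ring
    · by_cases h2 : X ≤ Y ∧ dY = dX + 1
      · rw [if_neg h1, if_pos h2, if_pos h2, hwX, hwY, h2.2, w_step]
        ring
      · by_cases h3 : X = Y
        · subst h3
          rw [if_neg h1, if_neg h2, if_pos rfl]
        · have h4 : ¬(Y = X) := fun h => h3 h.symm
          rw [if_neg h1, if_neg h2, if_neg h3, if_neg h2, if_neg h1, if_neg h4]
          ring
  have haX : Real.sqrt wX * Real.sqrt wX = wX := Real.mul_self_sqrt hwXpos.le
  have haY : Real.sqrt wY * Real.sqrt wY = wY := Real.mul_self_sqrt hwYpos.le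
  have hsX : Real.sqrt wX ≠ 0 := by positivity
  have hsY : Real.sqrt wY ≠ 0 := by positivity
  field_simp
  linear_combination (-1 : ℝ) * key + adjEnt q φ Y X * haY - adjEnt q φ X Y * haX
end

section
/- For all n ≥ 1 and k ≥ 1, the number of k-dimensional F-subspaces of F^{n+1} equals the number of k-dimensional F-subspaces of F^n, plus the number of (k−1)-dimensional F-subspaces of F^n, plus (q^n − 1) times the number of (k−1)-dimensional F-subspaces of F^{n−1}. -/
/-!
Write `[n, j]` for the number of `j`-subspaces of an `n`-dimensional space `V`, and split the
`(j+1)`-subspaces `X` of `V × F` according to whether they lie in the hyperplane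
`V × 0`. Those that do are the `(j+1)`-subspaces of `V`. One that does not is determined by its
trace `W` on `V`, of dimension `j`, together with the coset `c ∈ V ⧸ W` of those `v` with
`(v, 1) ∈ X`; so there are `q ^ (n - j) * [n, j]` of them. The remaining identity
`(q ^ (n - j) - 1) * [n, j] = (q ^ n - 1) * [n - 1, j]` comes from double counting the pairs
`(X, f)` of a `j`-subspace `X` and a nonzero functional `f` vanishing on `X`: for fixed `f` these
`X` are the `j`-subspaces of the hyperplane `ker f`.
-/

open Module

theorem Nat.card_subtype_ne {α : Type*} [Finite α] (a : α) :
    Nat.card {x : α // x ≠ a} = Nat.card α - 1 := by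
  classical
  have := Fintype.ofFinite α
  simp [Nat.card_eq_fintype_card, Fintype.card_subtype_compl]

theorem Nat.card_subtype_eq_card_and_add_card_and_not {α : Type*} [Finite α] (p q : α → Prop) :
    Nat.card {a // p a} = Nat.card {a // p a ∧ q a} + Nat.card {a // p a ∧ ¬ q a} := by
  classical
  rw [← Nat.card_sum]
  exact Nat.card_congr <| (Equiv.sumCompl fun a : {a // p a} => q a).symm.trans <|
    Equiv.sumCongr (Equiv.subtypeSubtypeEquivSubtypeInter p q)
      (Equiv.subtypeSubtypeEquivSubtypeInter p fun a => ¬ q a)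

theorem Nat.card_sigma_of_card_eq {α : Type*} [Finite α] {β : α → Type*}
    [∀ a, Finite (β a)] {c : ℕ} (h : ∀ a, Nat.card (β a) = c) :
    Nat.card (Σ a, β a) = Nat.card α * c := by
  have := Fintype.ofFinite α
  simp [Nat.card_sigma, h, Nat.card_eq_fintype_card]

noncomputable def numSubspaces (F V : Type*) [Field F] [AddCommGroup V] [Module F V] (k : ℕ) :
    ℕ :=
  Nat.card {X : Submodule F V // finrank F X = k}

section numSubspaces

variable {F V U : Type*} [Field F] [AddCommGroup V] [Module F V] [AddCommGroup U] [Module F U]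

theorem numSubspaces_congr (e : V ≃ₗ[F] U) (k : ℕ) :
    numSubspaces F V k = numSubspaces F U k :=
  Nat.card_congr <| (Submodule.orderIsoMapComap e).toEquiv.subtypeEquiv fun X => by
    rw [← e.finrank_map_eq X]; rfl

theorem numSubspaces_eq_of_finrank_eq [FiniteDimensional F V] [FiniteDimensional F U]
    (h : finrank F V = finrank F U) (k : ℕ) : numSubspaces F V k = numSubspaces F U k :=
  numSubspaces_congr (LinearEquiv.ofFinrankEq V U h) k

theorem card_subspaces_le (p : Submodule F V) (k : ℕ) :
    Nat.card {X : Submodule F V // finrank F X = k ∧ X ≤ p} = numSubspaces F p k :=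
  Nat.card_congr <| (Equiv.subtypeEquivRight fun _ => and_comm).trans <|
    (Equiv.subtypeSubtypeEquivSubtypeInter _ _).symm.trans <|
    ((Submodule.MapSubtype.orderIso p).toEquiv.subtypeEquiv fun X => by
      rw [← p.finrank_map_subtype_eq X]; rfl).symm

theorem numSubspaces_ker_eq [FiniteDimensional F V] [FiniteDimensional F U] {f : Dual F V}
    (hf : f ≠ 0) (hU : finrank F U + 1 = finrank F V) (k : ℕ) :
    numSubspaces F (LinearMap.ker f) k = numSubspaces F U k :=
  numSubspaces_eq_of_finrank_eq (by have := Dual.finrank_ker_add_one_of_ne_zero hf; omega) k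

theorem natCard_quotient [Finite F] [FiniteDimensional F V] (W : Submodule F V) :
    Nat.card (V ⧸ W) = Nat.card F ^ (finrank F V - finrank F W) := by
  rw [Module.natCard_eq_pow_finrank (K := F), ← W.finrank_quotient_add_finrank,
    Nat.add_sub_cancel]

end numSubspaces

section coneOfCoset

variable {F V : Type*} [Field F] [AddCommGroup V] [Module F V]

def coneOfCoset (W : Submodule F V) (c : V ⧸ W) : Submodule F (V × F) :=
  LinearMap.ker (W.mkQ ∘ₗ LinearMap.fst F V F - (LinearMap.snd F V F).smulRight c)

theorem mem_coneOfCoset {W : Submodule F V} {c : V ⧸ W} {x : V × F} :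
    x ∈ coneOfCoset W c ↔ W.mkQ x.1 = x.2 • c := by
  simp [coneOfCoset, sub_eq_zero]

theorem comap_inl_coneOfCoset (W : Submodule F V) (c : V ⧸ W) :
    (coneOfCoset W c).comap (LinearMap.inl F V F) = W := by
  ext v
  simp [mem_coneOfCoset]

theorem exists_mem_coneOfCoset (W : Submodule F V) (c : V ⧸ W) :
    ∃ v, ((v, 1) : V × F) ∈ coneOfCoset W c := by
  obtain ⟨v, rfl⟩ := W.mkQ_surjective c
  exact ⟨v, by simp [mem_coneOfCoset]⟩

theorem coneOfCoset_not_le_ker_snd (W : Submodule F V) (c : V ⧸ W) :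
    ¬ coneOfCoset W c ≤ LinearMap.ker (LinearMap.snd F V F) := fun h => by
  obtain ⟨v, hv⟩ := exists_mem_coneOfCoset W c
  simpa using h hv

theorem finrank_coneOfCoset [FiniteDimensional F V] (W : Submodule F V) (c : V ⧸ W) :
    finrank F (coneOfCoset W c) = finrank F W + 1 := by
  set φ := W.mkQ ∘ₗ LinearMap.fst F V F - (LinearMap.snd F V F).smulRight c
  have hφ : LinearMap.range φ = ⊤ := LinearMap.range_eq_top.2 fun y => by
    obtain ⟨v, rfl⟩ := W.mkQ_surjective y
    exact ⟨(v, 0), by simp [φ]⟩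
  have rank_nullity := φ.finrank_range_add_finrank_ker
  rw [hφ, finrank_top, finrank_prod, finrank_self] at rank_nullity
  have := W.finrank_quotient_add_finrank
  change finrank F (LinearMap.ker φ) = _
  omega

theorem coneOfCoset_injective :
    Function.Injective fun p : Σ W : Submodule F V, V ⧸ W => coneOfCoset p.1 p.2 := by
  rintro ⟨W, c⟩ ⟨W', c'⟩ (h : coneOfCoset W c = coneOfCoset W' c')
  obtain rfl : W = W' := by
    rw [← comap_inl_coneOfCoset W c, h, comap_inl_coneOfCoset]
  obtain ⟨v, hv⟩ := exists_mem_coneOfCoset W c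
  have hv' : ((v, 1) : V × F) ∈ coneOfCoset W c' := h ▸ hv
  rw [mem_coneOfCoset] at hv hv'
  simp only [one_smul] at hv hv'
  rw [← hv, hv']

theorem exists_coneOfCoset_eq {X : Submodule F (V × F)}
    (hX : ¬ X ≤ LinearMap.ker (LinearMap.snd F V F)) :
    ∃ W c, coneOfCoset W c = X := by
  obtain ⟨x, hxX, hx⟩ := SetLike.not_le_iff_exists.1 hX
  rw [LinearMap.mem_ker, LinearMap.snd_apply] at hx
  refine ⟨X.comap (LinearMap.inl F V F), Submodule.Quotient.mk (x.2⁻¹ • x.1), ?_⟩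
  ext y
  have hy : LinearMap.inl F V F (y.1 - y.2 • x.2⁻¹ • x.1) = y - (y.2 * x.2⁻¹) • x := by
    ext <;> simp [mul_smul, hx]
  rw [mem_coneOfCoset, Submodule.mkQ_apply, ← Submodule.Quotient.mk_smul,
    Submodule.Quotient.eq, Submodule.mem_comap, hy,
    Submodule.sub_mem_iff_left _ (X.smul_mem _ hxX)]

end coneOfCoset

section recurrences

variable {F V : Type*} [Field F] [Finite F] [AddCommGroup V] [Module F V] [FiniteDimensional F V]

theorem numSubspaces_prod_succ (j : ℕ) :
    numSubspaces F (V × F) (j + 1) =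
      numSubspaces F V (j + 1) + Nat.card F ^ (finrank F V - j) * numSubspaces F V j := by
  have : Finite V := Module.finite_of_finite F
  have hsnd : LinearMap.snd F V F ≠ 0 := fun h => by simpa using LinearMap.congr_fun h (0, 1)
  rw [numSubspaces, Nat.card_subtype_eq_card_and_add_card_and_not _
      (· ≤ LinearMap.ker (LinearMap.snd F V F)), card_subspaces_le,
    numSubspaces_ker_eq (U := V) hsnd (by rw [finrank_prod, finrank_self]), mul_comm]
  congr 1
  let cone (p : Σ W : {W : Submodule F V // finrank F W = j}, V ⧸ W.1) :
      {X : Submodule F (V × F) //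
        finrank F X = j + 1 ∧ ¬ X ≤ LinearMap.ker (LinearMap.snd F V F)} :=
    ⟨coneOfCoset p.1.1 p.2, by rw [finrank_coneOfCoset, p.1.2], coneOfCoset_not_le_ker_snd _ _⟩
  have hcone : Function.Bijective cone := by
    refine ⟨fun ⟨⟨W, _⟩, c⟩ ⟨⟨W', _⟩, c'⟩ h => ?_, fun ⟨X, hX, hXH⟩ => ?_⟩
    · have h' : coneOfCoset W c = coneOfCoset W' c' := congrArg Subtype.val h
      obtain ⟨rfl, hc⟩ := Sigma.mk.inj_iff.1 (coneOfCoset_injective h')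
      cases hc
      rfl
    · obtain ⟨W, c, rfl⟩ := exists_coneOfCoset_eq hXH
      rw [finrank_coneOfCoset, Nat.add_right_cancel_iff] at hX
      exact ⟨⟨⟨W, hX⟩, c⟩, rfl⟩
  have (W : Submodule F V) : Finite (V ⧸ W) := Module.finite_of_finite F
  rw [← Nat.card_eq_of_bijective cone hcone]
  exact Nat.card_sigma_of_card_eq fun W => by rw [natCard_quotient, W.2]

theorem natCard_dual_ne_zero_le_ker (X : Submodule F V) :
    Nat.card {f : Dual F V // f ≠ 0 ∧ X ≤ LinearMap.ker f} =
      Nat.card F ^ (finrank F V - finrank F X) - 1 := by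
  have : Finite (Dual F V) := Module.finite_of_finite F
  have e :
      {f : Dual F V // f ≠ 0 ∧ X ≤ LinearMap.ker f} ≃ {g : X.dualAnnihilator // g ≠ 0} :=
    { toFun f := ⟨⟨f.1, (Submodule.mem_dualAnnihilator _).2 fun v hv => f.2.2 hv⟩,
        fun h => f.2.1 (congrArg Subtype.val h)⟩
      invFun g := ⟨g.1.1, fun h => g.2 (Subtype.ext h),
        fun v hv => (Submodule.mem_dualAnnihilator _).1 g.1.2 v hv⟩ }
  rw [Nat.card_congr e, Nat.card_subtype_ne,
    ← Nat.card_congr (Subspace.quotEquivAnnihilator X).toEquiv, natCard_quotient]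

theorem natCard_dual_ne_zero :
    Nat.card {f : Dual F V // f ≠ 0} = Nat.card F ^ finrank F V - 1 := by
  have : Finite (Dual F V) := Module.finite_of_finite F
  rw [Nat.card_subtype_ne, Module.natCard_eq_pow_finrank (K := F), Subspace.dual_finrank_eq]

theorem pow_sub_one_mul_numSubspaces {U : Type*} [AddCommGroup U] [Module F U]
    [FiniteDimensional F U]
    (hU : finrank F U + 1 = finrank F V) (j : ℕ) :
    (Nat.card F ^ (finrank F V - j) - 1) * numSubspaces F V j =
      (Nat.card F ^ finrank F V - 1) * numSubspaces F U j := by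
  have : Finite (Dual F V) := Module.finite_of_finite F
  have : Finite V := Module.finite_of_finite F
  calc (Nat.card F ^ (finrank F V - j) - 1) * numSubspaces F V j
      = Nat.card (Σ X : {X : Submodule F V // finrank F X = j},
          {f : Dual F V // f ≠ 0 ∧ X.1 ≤ LinearMap.ker f}) := by
        rw [Nat.card_sigma_of_card_eq fun X => by rw [natCard_dual_ne_zero_le_ker, X.2], mul_comm]
        rfl
    _ = Nat.card (Σ f : {f : Dual F V // f ≠ 0},
          {X : Submodule F V // finrank F X = j ∧ X ≤ LinearMap.ker f.1}) :=
        Nat.card_congr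
          { toFun p := ⟨⟨p.2.1, p.2.2.1⟩, ⟨p.1.1, p.1.2, p.2.2.2⟩⟩
            invFun p := ⟨⟨p.2.1, p.2.2.1⟩, ⟨p.1.1, p.1.2, p.2.2.2⟩⟩ }
    _ = (Nat.card F ^ finrank F V - 1) * numSubspaces F U j := by
        rw [Nat.card_sigma_of_card_eq fun f => by
          rw [card_subspaces_le, numSubspaces_ker_eq f.2 hU], natCard_dual_ne_zero]

end recurrences

theorem stmt_6 (q n k : ℕ) (F : Type) [Field F] [Fintype F] (hq : Fintype.card F = q)
    (hn : 1 ≤ n) (hk : 1 ≤ k) :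
    Nat.card {X : Submodule F (Fin (n + 1) → F) // finrank F X = k} =
      Nat.card {X : Submodule F (Fin n → F) // finrank F X = k} +
        Nat.card {X : Submodule F (Fin n → F) // finrank F X = k - 1} +
        (q ^ n - 1) * Nat.card {X : Submodule F (Fin (n - 1) → F) // finrank F X = k - 1} := by
  obtain ⟨j, rfl⟩ : ∃ j, k = j + 1 := ⟨k - 1, by omega⟩
  rw [← hq, ← Nat.card_eq_fintype_card, Nat.add_sub_cancel]
  change numSubspaces F (Fin (n + 1) → F) (j + 1) =
    numSubspaces F (Fin n → F) (j + 1) + numSubspaces F (Fin n → F) j +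
      (Nat.card F ^ n - 1) * numSubspaces F (Fin (n - 1) → F) j
  have hsub := pow_sub_one_mul_numSubspaces (F := F) (V := Fin n → F) (U := Fin (n - 1) → F)
    (by simp only [finrank_fin_fun]; omega) j
  rw [finrank_fin_fun] at hsub
  have hle :
      numSubspaces F (Fin n → F) j ≤ Nat.card F ^ (n - j) * numSubspaces F (Fin n → F) j :=
    Nat.le_mul_of_pos_left _ (pow_pos Nat.card_pos _)
  rw [numSubspaces_eq_of_finrank_eq (U := (Fin n → F) × F) (by simp [finrank_prod]),
    numSubspaces_prod_succ, finrank_fin_fun, ← hsub, Nat.sub_one_mul]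
  omega
end

section
/- Let Z be an F-subspace of F^{n+1} contained in H₀ with dim Z = k ≤ n. Then the number of subspaces X ∈ B∂(n+1) with X ∩ H₀ = Z equals q^{n−k}. -/
open Module

noncomputable def H0 (F : Type) [Field F] (n : ℕ) : Submodule F (Fin (n + 1) → F) :=
  LinearMap.ker (LinearMap.proj (R := F) (φ := fun _ : Fin (n + 1) => F) (Fin.last n))

def gmap (F : Type) [Field F] (n : ℕ) (a : Fin n → F) :
    (Fin (n + 1) → F) →ₗ[F] (Fin (n + 1) → F) where
  toFun v := v + v (Fin.last n) • (Fin.snoc a 0 : Fin (n + 1) → F)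
  map_add' u v := by
    funext i
    simp only [Pi.add_apply, Pi.smul_apply, smul_eq_mul]
    ring
  map_smul' c v := by
    funext i
    simp only [Pi.add_apply, Pi.smul_apply, smul_eq_mul, RingHom.id_apply]
    ring

/-!
If `f` is a linear functional with `f e = 1` and `Z ≤ ker f`, every subspace `X ⊄ ker f` with
`X ⊓ ker f = Z` is `Z ⊔ K ∙ x` for any `x ∈ X` with `f x = 1` (modular law, since
`K ∙ x ⊔ ker f = ⊤`), and the vectors `x - e` so obtained form one coset of `Z` in `ker f`.
So these `X` are counted by `ker f ⧸ Z`, of dimension `n - k` over `F`.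
-/

namespace Submodule

open LinearMap

variable {K V : Type*} [Field K] [AddCommGroup V] [Module K V]

theorem sup_span_singleton_inf_eq {H Z : Submodule K V} {x : V} (hZ : Z ≤ H) (hx : x ∉ H) :
    (Z ⊔ K ∙ x) ⊓ H = Z := by
  rw [sup_inf_assoc_of_le _ hZ, inf_comm, (disjoint_span_singleton_of_notMem hx).eq_bot,
    sup_bot_eq]

theorem sup_span_singleton_eq_sup_span_singleton_iff {H Z : Submodule K V} {x y : V}
    (hZ : Z ≤ H) (hx : x ∉ H) (hxy : x - y ∈ H) :
    Z ⊔ K ∙ x = Z ⊔ K ∙ y ↔ x - y ∈ Z := by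
  have le_of_sub_mem : ∀ {a b : V}, a - b ∈ Z → Z ⊔ K ∙ a ≤ Z ⊔ K ∙ b := fun {a b} hab ↦
    sup_le le_sup_left <| (span_singleton_le_iff_mem _ _).mpr <| by
      simpa using add_mem (mem_sup_left hab) (mem_sup_right (mem_span_singleton_self b))
  refine ⟨fun h ↦ ?_, fun h ↦ le_antisymm (le_of_sub_mem h) (le_of_sub_mem (sub_mem_comm_iff.mp h))⟩
  have hy : y ∈ Z ⊔ K ∙ x := h ▸ mem_sup_right (mem_span_singleton_self y)
  rw [← sup_span_singleton_inf_eq hZ hx]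
  exact ⟨sub_mem (mem_sup_right (mem_span_singleton_self x)) hy, hxy⟩

theorem inf_ker_sup_span_singleton_eq (f : V →ₗ[K] K) {X : Submodule K V} {x : V}
    (hxX : x ∈ X) (hx : f x ≠ 0) : X ⊓ ker f ⊔ K ∙ x = X := by
  rw [inf_sup_assoc_of_le _ ((span_singleton_le_iff_mem _ _).mpr hxX), sup_comm,
    span_singleton_sup_ker_eq_top f hx, inf_top_eq]

variable {f : V →ₗ[K] K} {e : V} {Z : Submodule K V}

noncomputable def kerQuotientEquivSupSpanSingleton (he : f e = 1) (hZ : Z ≤ ker f) :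
    (ker f ⧸ Z.comap (ker f).subtype) ≃ {X : Submodule K V // ¬ X ≤ ker f ∧ X ⊓ ker f = Z} :=
  have hwe : ∀ w : ker f, (w : V) + e ∉ ker f := fun w ↦ by simp [he]
  let g : ker f → {X : Submodule K V // ¬ X ≤ ker f ∧ X ⊓ ker f = Z} := fun w ↦
    ⟨Z ⊔ K ∙ ((w : V) + e),
      fun hle ↦ hwe w (hle (mem_sup_right (mem_span_singleton_self _))),
      sup_span_singleton_inf_eq hZ (hwe w)⟩
  have hg : Function.Surjective g := by
    rintro ⟨X, hXH, hXZ⟩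
    obtain ⟨x, hxX, hx⟩ := SetLike.not_le_iff_exists.mp hXH
    have hx' : f ((f x)⁻¹ • x) = 1 := by simp [inv_mul_cancel₀ hx]
    refine ⟨⟨(f x)⁻¹ • x - e, by simp [hx', he]⟩, Subtype.ext ?_⟩
    simp only [g, sub_add_cancel]
    rw [← hXZ, inf_ker_sup_span_singleton_eq f (X.smul_mem _ hxX) (by simp [hx'])]
  (Quotient.congr (.refl _) fun a b ↦ by
      rw [quotientRel_def, Setoid.ker_def, Equiv.refl_apply, Equiv.refl_apply, Subtype.ext_iff,
        sup_span_singleton_eq_sup_span_singleton_iff hZ (hwe a) (by simp), add_sub_add_right_eq_sub]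
      rfl).trans
    (Setoid.quotientKerEquivOfSurjective g hg)

theorem natCard_not_le_ker_inf_ker_eq [Finite K] [FiniteDimensional K V] (hf : f ≠ 0)
    (hZ : Z ≤ ker f) :
    Nat.card {X : Submodule K V // ¬ X ≤ ker f ∧ X ⊓ ker f = Z} =
      Nat.card K ^ (finrank K V - 1 - finrank K Z) := by
  obtain ⟨e, he⟩ := LinearMap.surjective hf 1
  have hZ' : finrank K (Z.comap (ker f).subtype) = finrank K Z :=
    (comapSubtypeEquivOfLe hZ).finrank_eq
  have := (Z.comap (ker f).subtype).finrank_quotient_add_finrank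
  have := Module.Dual.finrank_ker_add_one_of_ne_zero hf
  rw [← Nat.card_congr (kerQuotientEquivSupSpanSingleton he hZ),
    Module.natCard_eq_pow_finrank (K := K)]
  congr 1
  omega

end Submodule

theorem stmt_9_general (q n k : ℕ) (F : Type) [Field F] [Fintype F] (hq : Fintype.card F = q)
    (Z : Submodule F (Fin (n + 1) → F)) (hZ : Z ≤ H0 F n) (hdim : finrank F ↥Z = k) :
    Nat.card {X : Submodule F (Fin (n + 1) → F) // ¬ X ≤ H0 F n ∧ X ⊓ H0 F n = Z} =
      q ^ (n - k) := by
  have hproj : LinearMap.proj (R := F) (φ := fun _ : Fin (n + 1) => F) (Fin.last n) ≠ 0 :=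
    fun h ↦ by simpa using LinearMap.congr_fun h (Pi.single (Fin.last n) 1)
  rw [H0, Submodule.natCard_not_le_ker_inf_ker_eq hproj hZ, Nat.card_eq_fintype_card, hq,
    Module.finrank_fin_fun, hdim, Nat.add_sub_cancel]

theorem stmt_9 (q n k : ℕ) (F : Type) [Field F] [Fintype F] (hq : Fintype.card F = q)
    (Z : Submodule F (Fin (n + 1) → F)) (hZ : Z ≤ H0 F n) (hdim : finrank F ↥Z = k)
    (hk : k ≤ n) :
    Nat.card {X : Submodule F (Fin (n + 1) → F) // ¬ X ≤ H0 F n ∧ X ⊓ H0 F n = Z} =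
      q ^ (n - k) :=
  stmt_9_general q n k F hq Z hZ hdim
end

section
/- For every X ∈ B∂(n+1), the orbit of X under the action of the additive group F^n, namely {g_a(X) : a ∈ F^n}, equals the equivalence class [X] = {Y ∈ B∂(n+1) : Y ∩ H₀ = X ∩ H₀}. -/
open Module

lemma mem_H0 {F : Type} [Field F] {n : ℕ} (v : Fin (n + 1) → F) :
    v ∈ H0 F n ↔ v (Fin.last n) = 0 := by
  simp [H0, LinearMap.mem_ker]

lemma gmap_last {F : Type} [Field F] {n : ℕ} (a : Fin n → F) (v : Fin (n + 1) → F) :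
    gmap F n a v (Fin.last n) = v (Fin.last n) := by
  simp [gmap, Fin.snoc_last]

lemma gmap_fix {F : Type} [Field F] {n : ℕ} (a : Fin n → F) (v : Fin (n + 1) → F)
    (hv : v (Fin.last n) = 0) : gmap F n a v = v := by
  simp [gmap, hv]

theorem stmt_10 (q n : ℕ) (F : Type) [Field F] [Fintype F] (hq : Fintype.card F = q)
    (X : Submodule F (Fin (n + 1) → F)) (hX : ¬ X ≤ H0 F n) :
    {Y : Submodule F (Fin (n + 1) → F) | ∃ a : Fin n → F, Submodule.map (gmap F n a) X = Y} =
      {Y : Submodule F (Fin (n + 1) → F) | ¬ Y ≤ H0 F n ∧ Y ⊓ H0 F n = X ⊓ H0 F n} := by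
  ext Y
  simp only [Set.mem_setOf_eq]
  constructor
  · rintro ⟨a, rfl⟩
    obtain ⟨w, hwX, hwH⟩ := SetLike.not_le_iff_exists.mp hX
    rw [mem_H0] at hwH
    constructor
    · intro hle
      have hm : gmap F n a w ∈ Submodule.map (gmap F n a) X := ⟨w, hwX, rfl⟩
      have := hle hm
      rw [mem_H0, gmap_last] at this
      exact hwH this
    · ext v
      simp only [Submodule.mem_inf, Submodule.mem_map]
      constructor
      · rintro ⟨⟨x, hx, rfl⟩, hv⟩
        rw [mem_H0, gmap_last] at hv
        rw [gmap_fix a x hv]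
        exact ⟨hx, (mem_H0 x).mpr hv⟩
      · rintro ⟨hvX, hvH⟩
        have h0 := (mem_H0 v).mp hvH
        exact ⟨⟨v, hvX, gmap_fix a v h0⟩, hvH⟩
  · rintro ⟨hY, hinf⟩
    obtain ⟨w, hwX, hwH⟩ := SetLike.not_le_iff_exists.mp hX
    obtain ⟨u, huY, huH⟩ := SetLike.not_le_iff_exists.mp hY
    rw [mem_H0] at hwH huH
    set w' : Fin (n + 1) → F := (w (Fin.last n))⁻¹ • w with hw'
    have hw'X : w' ∈ X := X.smul_mem _ hwX
    have hw'l : w' (Fin.last n) = 1 := by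
      simp [hw', inv_mul_cancel₀ hwH]
    set u' : Fin (n + 1) → F := (u (Fin.last n))⁻¹ • u with hu'
    have hu'Y : u' ∈ Y := Y.smul_mem _ huY
    have hu'l : u' (Fin.last n) = 1 := by
      simp [hu', inv_mul_cancel₀ huH]
    set a : Fin n → F := fun i => u' i.castSucc - w' i.castSucc with ha
    have key : gmap F n a w' = u' := by
      funext i
      refine Fin.lastCases ?_ ?_ i
      · simp [gmap, Fin.snoc_last, hw'l, hu'l]
      · intro j
        simp [gmap, Fin.snoc_castSucc, hw'l, ha]
    refine ⟨a, le_antisymm ?_ ?_⟩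
    · rintro _ ⟨x, hx, rfl⟩
      have hsub : x - x (Fin.last n) • w' ∈ X ⊓ H0 F n := by
        refine ⟨X.sub_mem hx (X.smul_mem _ hw'X), (mem_H0 _).mpr ?_⟩
        simp [hw'l]
      rw [← hinf] at hsub
      have hfix : gmap F n a (x - x (Fin.last n) • w') = x - x (Fin.last n) • w' :=
        gmap_fix _ _ (by simp [hw'l])
      have hdecomp : gmap F n a x = (x - x (Fin.last n) • w') + x (Fin.last n) • u' := by
        conv_lhs => rw [show x = (x - x (Fin.last n) • w') + x (Fin.last n) • w' by abel]
        rw [map_add, map_smul, hfix, key]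
      rw [hdecomp]
      exact Y.add_mem hsub.1 (Y.smul_mem _ hu'Y)
    · intro y hy
      have hsub : y - y (Fin.last n) • u' ∈ Y ⊓ H0 F n := by
        refine ⟨Y.sub_mem hy (Y.smul_mem _ hu'Y), (mem_H0 _).mpr ?_⟩
        simp [hu'l]
      rw [hinf] at hsub
      refine ⟨(y - y (Fin.last n) • u') + y (Fin.last n) • w',
        X.add_mem hsub.1 (X.smul_mem _ hw'X), ?_⟩
      have hfix : gmap F n a (y - y (Fin.last n) • u') = y - y (Fin.last n) • u' :=
        gmap_fix _ _ (by simp [hu'l])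
      rw [map_add, map_smul, hfix, key]
      abel
end

section
/- Let X, Y ∈ B∂(n+1) with X ⊆ Y, and let a ∈ F^n. If g_a(X) = X then g_a(Y) = Y. (The stabilizer G_X of X in the additive group F^n is contained in the stabilizer G_Y of Y.) -/
open Module

theorem stmt_12 (q n : ℕ) (F : Type) [Field F] [Fintype F] (hq : Fintype.card F = q)
    (X Y : Submodule F (Fin (n + 1) → F)) (hX : ¬ X ≤ H0 F n) (hY : ¬ Y ≤ H0 F n)
    (hXY : X ≤ Y) (a : Fin n → F) (ha : Submodule.map (gmap F n a) X = X) :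
    Submodule.map (gmap F n a) Y = Y := by
  -- there is x ∈ X with last coordinate nonzero
  obtain ⟨x, hxX, hxH⟩ := SetLike.not_le_iff_exists.mp hX
  have hxlast : x (Fin.last n) ≠ 0 := by
    simpa [H0, LinearMap.mem_ker] using hxH
  set s : Fin (n + 1) → F := (Fin.snoc a 0 : Fin (n + 1) → F) with hs
  have hslast : s (Fin.last n) = 0 := by simp [hs]
  -- g_a x ∈ X
  have hgx : gmap F n a x ∈ X := by
    rw [← ha]; exact Submodule.mem_map_of_mem hxX
  have hsmul : x (Fin.last n) • s ∈ X := by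
    have : gmap F n a x - x ∈ X := X.sub_mem hgx hxX
    simpa [gmap] using this
  have hsX : s ∈ X := by
    have := X.smul_mem (x (Fin.last n))⁻¹ hsmul
    rwa [smul_smul, inv_mul_cancel₀ hxlast, one_smul] at this
  have hsY : s ∈ Y := hXY hsX
  apply le_antisymm
  · rintro _ ⟨y, hy, rfl⟩
    have : gmap F n a y = y + y (Fin.last n) • s := rfl
    rw [this]
    exact Y.add_mem hy (Y.smul_mem _ hsY)
  · intro y hy
    refine ⟨y - y (Fin.last n) • s, Y.sub_mem hy (Y.smul_mem _ hsY), ?_⟩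
    show (y - y (Fin.last n) • s) + (y - y (Fin.last n) • s) (Fin.last n) • s = y
    simp [hslast]
end

section
/- Let n ≥ 1 and let χ be a nontrivial character of the additive group F^n. Then there is exactly one (n−1)-dimensional F-subspace X of H₀ such that p(χ)(X̂) is not the zero function. (This unique subspace is denoted X(χ); equivalently, the isotypic component W(χ,n) is one-dimensional.) -/
open Module

open Classical in
/-- `pchi F n χ X` is the function `p(χ)(X) : B_q(n+1) → ℂ` whose value at `Z` is
`∑_{a : g_a(X) = Z} conj (χ a)`; it vanishes off the orbit of `X`. -/
noncomputable def pchi (F : Type) [Field F] [Fintype F] (n : ℕ)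
    (χ : AddChar (Fin n → F) ℂ) (X : Submodule F (Fin (n + 1) → F)) :
    Submodule F (Fin (n + 1) → F) → ℂ :=
  fun Z => ∑ a : Fin n → F,
    if Submodule.map (gmap F n a) X = Z then (starRingEnd ℂ) (χ a) else 0

/-- For a subspace `X ⊆ H₀`, `hatX F n X` is the subspace `X̂` of `F^{n+1}` spanned by `X`
and the last standard basis vector `e_{n+1}`. -/
noncomputable def hatX (F : Type) [Field F] (n : ℕ) (X : Submodule F (Fin (n + 1) → F)) :
    Submodule F (Fin (n + 1) → F) :=
  X ⊔ Submodule.span F {Pi.single (Fin.last n) (1 : F)}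

/-!
The stabiliser of `X̂` in `F^n` is `A = {a | (a, 0) ∈ X}`, and on the orbit of `X̂` the function
`p(χ)(X̂)` takes the values `conj (χ b) · conj (∑_{a ∈ A} χ a)`, so `p(χ)(X̂) ≠ 0` iff
`χ` is trivial on `A`. The subspaces on which `χ` is trivial are those contained in
`S = {v | ∀ t, χ (t • v) = 1}`, and `S` has codimension one: it is a proper subspace, and
`v ↦ (t ↦ χ (t • v))` embeds `F^n ⧸ S` into the character group of `F`, which has `q`
elements.
Hence `X(χ) = S × 0` is the only `(n-1)`-dimensional choice.
-/

namespace AddChar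

variable {F V M : Type*} [Field F] [AddCommGroup V] [Module F V] [CommMonoid M]

variable (F) in
def kerSubmodule (χ : AddChar V M) : Submodule F V where
  carrier := {v | ∀ t : F, χ (t • v) = 1}
  add_mem' {v w} hv hw t := by rw [smul_add, map_add_eq_mul, hv t, hw t, one_mul]
  zero_mem' t := by rw [smul_zero, map_zero_eq_one]
  smul_mem' c v hv t := by rw [smul_smul]; exact hv (t * c)

variable {χ : AddChar V M}

lemma le_kerSubmodule_iff {A : Submodule F V} : A ≤ χ.kerSubmodule F ↔ ∀ a ∈ A, χ a = 1 :=
  ⟨fun h a ha => by simpa using h ha 1, fun h _ ha t => h _ (A.smul_mem t ha)⟩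

lemma sum_ne_zero_iff_le_kerSubmodule {R : Type*} [CommRing R] [IsDomain R] [CharZero R]
    {χ : AddChar V R} (A : Submodule F V) [Fintype A] :
    ∑ a : A, χ a ≠ 0 ↔ A ≤ χ.kerSubmodule F := by
  rw [le_kerSubmodule_iff]
  exact (sum_ne_zero_iff_eq_zero (ψ := χ.compAddMonoidHom A.subtype.toAddMonoidHom)).trans
    (eq_zero_iff.trans Subtype.forall)

lemma kerSubmodule_ne_top (hχ : χ ≠ 0) : χ.kerSubmodule F ≠ ⊤ := by
  obtain ⟨a, ha⟩ := ne_zero_iff.1 hχ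
  exact fun h => ha (le_kerSubmodule_iff.1 h.ge a trivial)

variable (F) in
def restrictLines (χ : AddChar V M) : V →+ AddChar F M where
  toFun v := χ.compAddMonoidHom (LinearMap.toSpanSingleton F V v).toAddMonoidHom
  map_zero' := by ext; simp
  map_add' v w := by ext; simp [map_add_eq_mul]

lemma ker_restrictLines : (χ.restrictLines F).ker = (χ.kerSubmodule F).toAddSubgroup := by
  ext v
  simp [restrictLines, eq_zero_iff, kerSubmodule]

lemma finrank_kerSubmodule_add_one {R : Type*} [RCLike R] [Finite F] [FiniteDimensional F V]
    {χ : AddChar V R} (hχ : χ ≠ 0) : finrank F (χ.kerSubmodule F) + 1 = finrank F V := by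
  cases nonempty_fintype F
  have hcard : Nat.card V ≤ Nat.card (χ.kerSubmodule F) * Nat.card F := by
    rw [← (χ.restrictLines F).ker.card_mul_index, AddSubgroup.index_ker, ker_restrictLines]
    refine Nat.mul_le_mul_left _ (Finite.card_subtype_le _ |>.trans ?_)
    simpa only [Nat.card_eq_fintype_card] using AddChar.card_addChar_le F R
  rw [Module.natCard_eq_pow_finrank (K := F) (V := V),
    Module.natCard_eq_pow_finrank (K := F) (V := χ.kerSubmodule F), ← pow_succ] at hcard
  have := (Nat.pow_le_pow_iff_right Finite.one_lt_card).1 hcard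
  have := Submodule.finrank_lt (kerSubmodule_ne_top (F := F) hχ)
  omega

end AddChar

section Geometry

variable {F : Type} [Field F] {n : ℕ}

variable (F n) in
def iota : (Fin n → F) →ₗ[F] (Fin (n + 1) → F) where
  toFun a := Fin.snoc a 0
  map_add' a b := by
    funext i
    refine Fin.lastCases ?_ (fun j => ?_) i <;> simp
  map_smul' c a := by
    funext i
    refine Fin.lastCases ?_ (fun j => ?_) i <;> simp

lemma iota_apply (a : Fin n → F) : iota F n a = Fin.snoc a 0 := rfl

lemma iota_injective : Function.Injective (iota F n) := fun a b h =>
  funext fun i => by simpa [iota_apply] using congrFun h i.castSucc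

lemma mem_H0_iff {v : Fin (n + 1) → F} : v ∈ H0 F n ↔ v (Fin.last n) = 0 := Iff.rfl

lemma range_iota : LinearMap.range (iota F n) = H0 F n := by
  ext v
  refine ⟨?_, fun hv => ⟨Fin.init v, ?_⟩⟩
  · rintro ⟨a, rfl⟩
    simp [mem_H0_iff, iota_apply]
  · rw [iota_apply, ← mem_H0_iff.1 hv, Fin.snoc_init_self]

lemma finrank_map_iota (A : Submodule F (Fin n → F)) :
    finrank F (A.map (iota F n)) = finrank F A :=
  (Submodule.equivMapOfInjective _ iota_injective A).finrank_eq.symm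

lemma gmap_add (a b : Fin n → F) : gmap F n (a + b) = gmap F n a ∘ₗ gmap F n b := by
  ext v i
  refine Fin.lastCases ?_ (fun j => ?_) i <;> simp [gmap]; ring

lemma gmap_zero : gmap F n 0 = LinearMap.id := by
  ext v i
  refine Fin.lastCases ?_ (fun j => ?_) i <;> simp [gmap]

lemma gmap_injective (a : Fin n → F) : Function.Injective (gmap F n a) :=
  Function.LeftInverse.injective (g := gmap F n (-a)) fun v => by
    rw [← LinearMap.comp_apply, ← gmap_add, neg_add_cancel, gmap_zero, LinearMap.id_apply]

lemma map_gmap_eq_map_gmap_iff (Y : Submodule F (Fin (n + 1) → F)) (a b : Fin n → F) :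
    Y.map (gmap F n a) = Y.map (gmap F n b) ↔ Y.map (gmap F n (a - b)) = Y := by
  conv_lhs => rw [← add_sub_cancel b a, gmap_add, Submodule.map_comp]
  exact (Submodule.map_injective_of_injective (gmap_injective b)).eq_iff

variable {X : Submodule F (Fin (n + 1) → F)}

lemma gmap_apply_of_mem_H0 {v : Fin (n + 1) → F} (hv : v ∈ H0 F n) (a : Fin n → F) :
    gmap F n a v = v := by
  simp [gmap, mem_H0_iff.1 hv]

lemma gmap_single_last (a : Fin n → F) :
    gmap F n a (Pi.single (Fin.last n) 1) = Pi.single (Fin.last n) 1 + iota F n a := by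
  simp [gmap, iota_apply]

lemma map_gmap_of_le_H0 (hX : X ≤ H0 F n) (a : Fin n → F) : X.map (gmap F n a) = X := by
  ext v
  refine ⟨?_, fun hv => ⟨v, hv, gmap_apply_of_mem_H0 (hX hv) a⟩⟩
  rintro ⟨w, hw, rfl⟩
  rwa [gmap_apply_of_mem_H0 (hX hw)]

lemma map_gmap_hatX (hX : X ≤ H0 F n) (a : Fin n → F) :
    (hatX F n X).map (gmap F n a) =
      X ⊔ Submodule.span F {Pi.single (Fin.last n) 1 + iota F n a} := by
  rw [hatX, Submodule.map_sup, map_gmap_of_le_H0 hX, Submodule.map_span, Set.image_singleton,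
    gmap_single_last]

lemma hatX_inf_H0 (hX : X ≤ H0 F n) : hatX F n X ⊓ H0 F n = X := by
  have he : Pi.single (Fin.last n) (1 : F) ∉ H0 F n := by simp [mem_H0_iff]
  rw [hatX, sup_inf_assoc_of_le _ hX, inf_comm,
    (Submodule.disjoint_span_singleton_of_notMem he).eq_bot, sup_bot_eq]

lemma map_gmap_hatX_eq_self_iff (hX : X ≤ H0 F n) (a : Fin n → F) :
    (hatX F n X).map (gmap F n a) = hatX F n X ↔ iota F n a ∈ X := by
  set e : Fin (n + 1) → F := Pi.single (Fin.last n) 1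
  have he : e ∈ hatX F n X := Submodule.mem_sup_right (Submodule.mem_span_singleton_self e)
  rw [map_gmap_hatX hX]
  constructor
  · intro h
    have hea : e + iota F n a ∈ hatX F n X :=
      h ▸ Submodule.mem_sup_right (Submodule.mem_span_singleton_self _)
    have : iota F n a ∈ hatX F n X ⊓ H0 F n :=
      ⟨by simpa using sub_mem hea he, range_iota (F := F) ▸ LinearMap.mem_range_self _ a⟩
    rwa [hatX_inf_H0 hX] at this
  · intro h
    apply le_antisymm <;> rw [hatX, sup_le_iff, Submodule.span_singleton_le_iff_mem] <;>
      refine ⟨le_sup_left, ?_⟩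
    · exact add_mem he (Submodule.mem_sup_left h)
    · simpa using sub_mem (Submodule.mem_sup_right (Submodule.mem_span_singleton_self _))
        (Submodule.mem_sup_left h : iota F n a ∈ X ⊔ Submodule.span F {e + iota F n a})

end Geometry

section Character

variable {F : Type} [Field F] [Fintype F] {n : ℕ} (χ : AddChar (Fin n → F) ℂ)

open ComplexConjugate

lemma pchi_apply_map_gmap (Y : Submodule F (Fin (n + 1) → F)) (b : Fin n → F) :
    pchi F n χ Y (Y.map (gmap F n b)) = conj (χ b) * pchi F n χ Y Y := by
  simp only [pchi, map_gmap_eq_map_gmap_iff, Finset.mul_sum, mul_ite, mul_zero]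
  refine (Fintype.sum_equiv (Equiv.addLeft b) _ _ fun c => ?_).symm
  simp [AddChar.map_add_eq_mul]

lemma pchi_apply_eq_zero {Y Z : Submodule F (Fin (n + 1) → F)}
    (hZ : ∀ b, Y.map (gmap F n b) ≠ Z) : pchi F n χ Y Z = 0 :=
  Finset.sum_eq_zero fun a _ => if_neg (hZ a)

lemma pchi_ne_zero_iff (Y : Submodule F (Fin (n + 1) → F)) :
    pchi F n χ Y ≠ 0 ↔ pchi F n χ Y Y ≠ 0 := by
  refine ⟨fun h hY => h (funext fun Z => ?_), fun h hY => h (congrFun hY Y)⟩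
  by_cases hZ : ∃ b, Y.map (gmap F n b) = Z
  · obtain ⟨b, rfl⟩ := hZ
    rw [pchi_apply_map_gmap, hY, mul_zero, Pi.zero_apply]
  · exact pchi_apply_eq_zero χ (not_exists.1 hZ)

open Classical in
lemma pchi_hatX_apply_self {X : Submodule F (Fin (n + 1) → F)} (hX : X ≤ H0 F n) :
    pchi F n χ (hatX F n X) (hatX F n X) = conj (∑ a : X.comap (iota F n), χ a) := by
  simp only [pchi, map_gmap_hatX_eq_self_iff hX, map_sum]
  rw [← Finset.sum_filter]
  exact Finset.sum_subtype _ (by simp) _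

lemma pchi_hatX_ne_zero_iff {X : Submodule F (Fin (n + 1) → F)} (hX : X ≤ H0 F n) :
    pchi F n χ (hatX F n X) ≠ 0 ↔ X.comap (iota F n) ≤ χ.kerSubmodule F := by
  classical
  rw [pchi_ne_zero_iff, pchi_hatX_apply_self χ hX, map_ne_zero,
    AddChar.sum_ne_zero_iff_le_kerSubmodule]

end Character

theorem stmt_16_general (n : ℕ) (F : Type) [Field F] [Fintype F]
    (χ : AddChar (Fin n → F) ℂ) (hχ : ∃ a, χ a ≠ 1) :
    ∃! X : Submodule F (Fin (n + 1) → F),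
      X ≤ H0 F n ∧ finrank F X = n - 1 ∧ pchi F n χ (hatX F n X) ≠ 0 := by
  set S := χ.kerSubmodule F
  have hS : finrank F S = n - 1 := by
    have := AddChar.finrank_kerSubmodule_add_one (F := F) (AddChar.ne_zero_iff.2 hχ)
    rw [finrank_fin_fun] at this
    exact Nat.eq_sub_of_add_eq this
  have hSH0 : S.map (iota F n) ≤ H0 F n := range_iota (F := F) ▸ LinearMap.map_le_range
  refine ⟨S.map (iota F n), ⟨hSH0, by rw [finrank_map_iota, hS], ?_⟩, ?_⟩
  · rw [pchi_hatX_ne_zero_iff χ hSH0, Submodule.comap_map_eq_of_injective iota_injective]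
  · rintro X ⟨hX, hXrank, hXχ⟩
    have hmap : (X.comap (iota F n)).map (iota F n) = X :=
      Submodule.map_comap_eq_of_le (range_iota (F := F) ▸ hX)
    have hrank : finrank F (X.comap (iota F n)) = finrank F S := by
      rw [← finrank_map_iota, hmap, hXrank, hS]
    rw [← hmap, Submodule.eq_of_le_of_finrank_eq ((pchi_hatX_ne_zero_iff χ hX).1 hXχ) hrank]

theorem stmt_16 (q n : ℕ) (F : Type) [Field F] [Fintype F] (hq : Fintype.card F = q)
    (hn : 1 ≤ n) (χ : AddChar (Fin n → F) ℂ) (hχ : ∃ a, χ a ≠ 1) :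
    ∃! X : Submodule F (Fin (n + 1) → F),
      X ≤ H0 F n ∧ finrank F X = n - 1 ∧ pchi F n χ (hatX F n X) ≠ 0 :=
  stmt_16_general n F χ hχ
end
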